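/- arXiv:2509.12342 — 3 statements merged into one kernel-verified Lean document; each statement's English description precedes it below -/
import Mathlib

section
/- Let M be an n×n real matrix each of whose row sums equals the same constant t. Then for every real number x such that xI_n − M is invertible, the M-coronal satisfies Γ_M(x) = n/(x − t). -/
open Finset Matrix Polynomial

/-- The vertex-edge incidence matrix `R(G)` of a graph `G`: rows indexed by vertices,
columns indexed by edges, with entry `1` exactly when the vertex is incident with the edge. -/
def incMat {V : Type*} [DecidableEq V] (G : SimpleGraph V) : Matrix V G.edgeSet ℝ :=
  Matrix.of fun v e => if v ∈ (e : Sym2 V) then (1 : ℝ) else 0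

/-- The `M`-coronal `Γ_M(x)`: the sum of all entries of `(xI - M)⁻¹`. -/
noncomputable def coronal {n : Type*} [Fintype n] [DecidableEq n]
    (M : Matrix n n ℝ) (x : ℝ) : ℝ :=
  ∑ i, ∑ j, (x • (1 : Matrix n n ℝ) - M)⁻¹ i j

/-- The T-vertex neighbourhood corona `G₁ ⊡_T G₂`: the disjoint union of the T-graph
`T(G₁)` (on `V₁ ⊕ E(G₁)`) and one copy of `G₂` for each vertex of `G₁`, where every
vertex of the `i`-th copy of `G₂` is joined to every neighbour of `vᵢ` in `T(G₁)`,
i.e. to every vertex of `G₁` adjacent to `vᵢ` and to every edge of `G₁` incident with `vᵢ`. -/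
def tVertexCorona {V₁ V₂ : Type*} (G₁ : SimpleGraph V₁) (G₂ : SimpleGraph V₂) :
    SimpleGraph (V₁ ⊕ (G₁.edgeSet ⊕ V₁ × V₂)) :=
  SimpleGraph.fromRel fun a b =>
    match a, b with
    | Sum.inl u, Sum.inl v => G₁.Adj u v
    | Sum.inl u, Sum.inr (Sum.inl e) => u ∈ (e : Sym2 V₁)
    | Sum.inl u, Sum.inr (Sum.inr iw) => G₁.Adj u iw.1
    | Sum.inr (Sum.inl e), Sum.inr (Sum.inl f) => ∃ v, v ∈ (e : Sym2 V₁) ∧ v ∈ (f : Sym2 V₁)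
    | Sum.inr (Sum.inl e), Sum.inr (Sum.inr iw) => iw.1 ∈ (e : Sym2 V₁)
    | Sum.inr (Sum.inr iw), Sum.inr (Sum.inr jw) => iw.1 = jw.1 ∧ G₂.Adj iw.2 jw.2
    | _, _ => False

/-- The T-edge neighbourhood corona `G₁ ⊟_T G₂`: the disjoint union of the T-graph
`T(G₁)` (on `V₁ ⊕ E(G₁)`) and one copy of `G₂` for each edge of `G₁`, where every
vertex of the `i`-th copy of `G₂` is joined to the two endpoints of the edge `eᵢ`
(as vertices of `G₁` inside `T(G₁)`). -/
def tEdgeCorona {V₁ V₂ : Type*} (G₁ : SimpleGraph V₁) (G₂ : SimpleGraph V₂) :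
    SimpleGraph (V₁ ⊕ (G₁.edgeSet ⊕ G₁.edgeSet × V₂)) :=
  SimpleGraph.fromRel fun a b =>
    match a, b with
    | Sum.inl u, Sum.inl v => G₁.Adj u v
    | Sum.inl u, Sum.inr (Sum.inl e) => u ∈ (e : Sym2 V₁)
    | Sum.inl u, Sum.inr (Sum.inr ew) => u ∈ (ew.1 : Sym2 V₁)
    | Sum.inr (Sum.inl e), Sum.inr (Sum.inl f) => ∃ v, v ∈ (e : Sym2 V₁) ∧ v ∈ (f : Sym2 V₁)
    | Sum.inr (Sum.inr ew), Sum.inr (Sum.inr fw) => ew.1 = fw.1 ∧ G₂.Adj ew.2 fw.2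
    | _, _ => False

noncomputable instance {V₁ V₂ : Type*} (G₁ : SimpleGraph V₁) (G₂ : SimpleGraph V₂) :
    DecidableRel (tVertexCorona G₁ G₂).Adj := Classical.decRel _

noncomputable instance {V₁ V₂ : Type*} (G₁ : SimpleGraph V₁) (G₂ : SimpleGraph V₂) :
    DecidableRel (tEdgeCorona G₁ G₂).Adj := Classical.decRel _

noncomputable instance {V : Type*} (G : SimpleGraph V) :
    DecidableRel (G.lineGraph).Adj := Classical.decRel _

/-- If every row sum of the `n × n` real matrix `M` equals the constant `t`, then for
every real `x` such that `xIₙ - M` is invertible, the `M`-coronal satisfies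
`Γ_M(x) = n / (x - t)`. -/
theorem coronal_of_constant_rowSum (n : ℕ) (M : Matrix (Fin n) (Fin n) ℝ) (t : ℝ)
    (hrow : ∀ i, ∑ j, M i j = t) (x : ℝ)
    (hx : IsUnit (x • (1 : Matrix (Fin n) (Fin n) ℝ) - M)) :
    coronal M x = n / (x - t) := by
  set A := x • (1 : Matrix (Fin n) (Fin n) ℝ) - M with hA
  have hAmul : A.mulVec (fun _ => (1 : ℝ)) = fun _ => (x - t) := by
    funext i
    simp only [Matrix.mulVec, dotProduct, hA, Matrix.sub_apply, Matrix.smul_apply,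
      Matrix.one_apply, smul_eq_mul, mul_one, sub_mul]
    rw [Finset.sum_sub_distrib]
    simp [Finset.sum_ite_eq, hrow i]
  rcases eq_or_ne n 0 with hn | hn
  · subst hn
    simp [coronal]
  have hxt : x ≠ t := by
    intro h
    subst h
    have h0 : A.mulVec (fun _ => (1 : ℝ)) = 0 := by
      rw [hAmul]; funext i; simp
    have hinj : Function.Injective A.mulVec := by
      intro u v huv
      have := congrArg (fun w => A⁻¹.mulVec w) huv
      simpa [Matrix.mulVec_mulVec, Matrix.nonsing_inv_mul A
        ((Matrix.isUnit_iff_isUnit_det A).mp hx), Matrix.one_mulVec] using this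
    have : (fun _ => (1 : ℝ)) = (0 : Fin n → ℝ) := by
      apply hinj
      rw [h0, Matrix.mulVec_zero]
    have := congrFun this ⟨0, Nat.pos_of_ne_zero hn⟩
    norm_num at this
  have hdet : IsUnit A.det := (Matrix.isUnit_iff_isUnit_det A).mp hx
  have hinv : A⁻¹.mulVec (fun _ => (x - t)) = fun _ => (1 : ℝ) := by
    rw [← hAmul, Matrix.mulVec_mulVec, Matrix.nonsing_inv_mul A hdet, Matrix.one_mulVec]
  have key : ∀ i, ∑ j, A⁻¹ i j = 1 / (x - t) := by
    intro i
    have := congrFun hinv i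
    simp only [Matrix.mulVec, dotProduct] at this
    have hsum : (∑ j, A⁻¹ i j) * (x - t) = 1 := by
      rw [Finset.sum_mul]; exact this
    rw [eq_div_iff (sub_ne_zero.mpr hxt)]
    exact hsum
  have : coronal M x = ∑ i : Fin n, (1 / (x - t)) := by
    unfold coronal
    rw [← hA]
    exact Finset.sum_congr rfl fun i _ => key i
  rw [this]
  simp [Finset.sum_const, div_eq_mul_inv, mul_comm]
end

section
/- Let G_1 be an r_1-regular graph with n_1 vertices v_1,…,v_{n_1} and m_1 edges, and let G_2 be an arbitrary graph with n_2 vertices. Write R = R(G_1) for the incidence matrix of G_1, let λ_1(G_1) ≥ … ≥ λ_{n_1}(G_1) be the adjacency eigenvalues of G_1 listed with multiplicity, and write Γ = Γ_{A(G_2)}(x). Then for every real number x ≠ −2 such that xI_{n_2} − A(G_2) and (x+2)I_{m_1} − (1+Γ)RᵀR are invertible: det(xI − A(G_1 ⊡_T G_2)) = det(xI_{n_2} − A(G_2))^{n_1} · (x+2)^{m_1−n_1} · ∏_{i=1}^{n_1} [ (x+2) − (1+Γ)(λ_i(G_1)+r_1) ] · det( xI_{n_1} − A(G_1) − Γ·A(G_1)²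 − (I_{n_1}+Γ·A(G_1)) R ((x+2)I_{m_1} − (1+Γ)RᵀR)⁻¹ Rᵀ (I_{n_1}+Γ·A(G_1)) ). -/
open Finset Matrix Polynomial

open scoped Kronecker

/-!
Order the vertices of `G₁ ⊡_T G₂` as `(V₁ ⊕ E(G₁)) ⊕ (V₁ × V₂)`. The block of the copies of
`G₂` is `I ⊗ (xI - A(G₂))`, and every copy is joined to `T(G₁)` through a column of
`N = [A; Rᵀ]`, so the Schur complement of that block is `xI - A(T(G₁)) - Γ N Nᵀ`. As
`A(L(G₁)) = RᵀR - 2I`, its edge block is `(x + 2)I - (1 + Γ)RᵀR`; a second Schur complement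
with respect to it gives the last factor, while its own determinant follows from
`det(aI - cRᵀR) = a^(m-n) det(aI - cRRᵀ)` and `RRᵀ = A + r₁I`.
-/

namespace Matrix

variable {l m n o R : Type*}

theorem det_smul_one_sub_mul_comm [Fintype m] [Fintype n] [DecidableEq m] [DecidableEq n]
    {K : Type*} [Field K] {a : K} (ha : a ≠ 0) (A : Matrix m n K) (B : Matrix n m K) :
    det (a • 1 - B * A) =
      a ^ ((Fintype.card n : ℤ) - Fintype.card m) * det (a • 1 - A * B) := by
  have h : a ^ Fintype.card n * det (a • 1 - A * B) =
      a ^ Fintype.card m * det (a • 1 - B * A) := by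
    simpa [eval_charpoly, smul_one_eq_diagonal] using
      congrArg (Polynomial.eval a) (charpoly_mul_comm' A B)
  rw [zpow_sub₀ ha, zpow_natCast, zpow_natCast, div_mul_eq_mul_div, h,
    mul_div_cancel_left₀ _ (pow_ne_zero _ ha)]

theorem det_smul_one_sub_smul_of_det_eq_prod [Fintype n] [DecidableEq n] {K : Type*} [Field K]
    (A : Matrix n n K) (lam : Fin (Fintype.card n) → K)
    (hfac : ∀ y : K, det (y • (1 : Matrix n n K) - A) = ∏ i, (y - lam i)) (s t : K) :
    det (s • (1 : Matrix n n K) - t • A) = ∏ i, (s - t * lam i) := by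
  rcases eq_or_ne t 0 with rfl | ht
  · simp
  · have h : s • (1 : Matrix n n K) - t • A = t • ((s / t) • (1 : Matrix n n K) - A) := by
      rw [smul_sub, smul_smul, mul_div_cancel₀ s ht]
    have hcard : t ^ Fintype.card n = t ^ (Finset.univ : Finset (Fin (Fintype.card n))).card := by
      simp
    rw [h, det_smul, hfac, hcard, Finset.pow_card_mul_prod]
    simp only [mul_sub, mul_div_cancel₀ s ht]

theorem submatrix_smul_one_sub_equiv [DecidableEq m] [DecidableEq n] [Ring R] (e : m ≃ n)
    (x : R) (A : Matrix n n R) : (x • 1 - A).submatrix e e = x • 1 - A.submatrix e e := by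
  ext i j
  simp [one_apply, e.injective.eq_iff]

theorem smul_one_sub_fromBlocks [DecidableEq m] [DecidableEq n] [Ring R] (x : R)
    (A : Matrix m m R) (B : Matrix m n R) (C : Matrix n m R) (D : Matrix n n R) :
    x • 1 - fromBlocks A B C D = fromBlocks (x • 1 - A) (-B) (-C) (x • 1 - D) := by
  ext (i | i) (j | j) <;> simp [one_apply]

theorem smul_one_sub_one_kronecker [DecidableEq m] [DecidableEq n] [CommRing R] (x : R)
    (B : Matrix n n R) :
    x • 1 - (1 : Matrix m m R) ⊗ₖ B = (1 : Matrix m m R) ⊗ₖ (x • 1 - B) := by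
  ext ⟨i, k⟩ ⟨j, l⟩
  by_cases hij : i = j <;> by_cases hkl : k = l <;> simp [hij, hkl]

theorem submatrix_fst_mul_one_kronecker_mul [Fintype m] [DecidableEq m] [Fintype o]
    [CommSemiring R] (N : Matrix l m R) (Q : Matrix o o R) (M : Matrix m n R) :
    N.submatrix id (Prod.fst : m × o → m) * ((1 : Matrix m m R) ⊗ₖ Q) *
        (M.submatrix Prod.fst id : Matrix (m × o) n R) = (∑ i, ∑ j, Q i j) • (N * M) := by
  have hrow : ∀ a q,
      (N.submatrix id (Prod.fst : m × o → m) * ((1 : Matrix m m R) ⊗ₖ Q)) a q =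
        N a q.1 * ∑ w, Q w q.2 := by
    intro a q
    simp [mul_apply, Fintype.sum_prod_type, one_apply, Finset.mul_sum]
  ext a b
  rw [mul_apply, smul_apply, mul_apply, smul_eq_mul, Finset.mul_sum, Fintype.sum_prod_type]
  refine Finset.sum_congr rfl fun i _ => ?_
  simp only [hrow, submatrix_apply, id, Finset.sum_mul, Finset.mul_sum]
  rw [Finset.sum_comm]
  exact Finset.sum_congr rfl fun _ _ => Finset.sum_congr rfl fun _ _ => by ring

end Matrix

namespace SimpleGraph

variable {V : Type*} [DecidableEq V] (G : SimpleGraph V)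

theorem incMat_apply_eq_incMatrix [DecidableRel G.Adj] (u : V) (e : G.edgeSet) :
    incMat G u e = G.incMatrix ℝ u e := by
  simp [incMat, incMatrix_apply', incidenceSet, e.2]

theorem incMat_mul_transpose [Fintype V] [DecidableRel G.Adj] :
    incMat G * (incMat G)ᵀ = G.incMatrix ℝ * (G.incMatrix ℝ)ᵀ := by
  ext u v
  calc ∑ e, incMat G u e * (incMat G)ᵀ e v
      = ∑ e : G.edgeSet, G.incMatrix ℝ u e * G.incMatrix ℝ v e := by
        simp only [transpose_apply, incMat_apply_eq_incMatrix]
    _ = ∑ e ∈ G.edgeFinset, G.incMatrix ℝ u e * G.incMatrix ℝ v e := by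
        rw [Finset.sum_subtype G.edgeFinset (fun _ => mem_edgeFinset)]
    _ = ∑ e, G.incMatrix ℝ u e * (G.incMatrix ℝ)ᵀ e v :=
        Finset.sum_subset (Finset.subset_univ _) fun e _ he => by
          rw [incMatrix_of_notMem_incidenceSet _ fun h => he (mem_edgeFinset.2 h.1), zero_mul]

theorem incMat_mul_transpose_of_isRegularOfDegree [Fintype V] [DecidableRel G.Adj] {r : ℕ}
    (hreg : G.IsRegularOfDegree r) :
    incMat G * (incMat G)ᵀ = G.adjMatrix ℝ + (r : ℝ) • 1 := by
  rw [incMat_mul_transpose, incMatrix_mul_transpose]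
  ext u v
  by_cases h : u = v
  · subst h; simp [hreg u]
  · simp [h, adjMatrix_apply]

theorem incMat_transpose_mul [Fintype V] :
    (incMat G)ᵀ * incMat G = G.lineGraph.adjMatrix ℝ + (2 : ℝ) • 1 := by
  ext e f
  simp only [mul_apply, transpose_apply, incMat, of_apply, ite_zero_mul_ite_zero, one_mul,
    Finset.sum_boole, Matrix.add_apply, Matrix.smul_apply, one_apply, adjMatrix_apply,
    lineGraph_adj_iff_exists]
  obtain rfl | hne := eq_or_ne e f
  · have hcard := Sym2.card_toFinset_of_not_isDiag _ (G.not_isDiag_of_mem_edgeSet e.2)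
    have hfilter : ({u | u ∈ (e : Sym2 V)} : Finset V) = (e : Sym2 V).toFinset := by
      ext; simp
    simp [hfilter, hcard]
  · have hle : #({u | u ∈ (e : Sym2 V) ∧ u ∈ (f : Sym2 V)} : Finset V) ≤ 1 := by
      refine Finset.card_le_one.2 fun a ha b hb => by_contra fun hab => hne (Subtype.ext ?_)
      simp only [Finset.mem_filter, Finset.mem_univ, true_and] at ha hb
      exact ((Sym2.mem_and_mem_iff hab).1 ⟨ha.1, hb.1⟩).trans
        ((Sym2.mem_and_mem_iff hab).1 ⟨ha.2, hb.2⟩).symm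
    rcases Nat.le_one_iff_eq_zero_or_eq_one.1 hle with h0 | h1
    · have : ¬ ∃ v, v ∈ (e : Sym2 V) ∧ v ∈ (f : Sym2 V) := by
        simpa [Finset.card_eq_zero, Finset.filter_eq_empty_iff] using h0
      simp [hne, this, h0]
    · have : ∃ v, v ∈ (e : Sym2 V) ∧ v ∈ (f : Sym2 V) := by
        obtain ⟨v, hv⟩ := Finset.card_eq_one.1 h1
        exact ⟨v, by simpa using (Finset.ext_iff.1 hv v).2 (Finset.mem_singleton_self v)⟩
      simp [hne, this, h1]

theorem det_smul_one_sub_smul_incMat_transpose_mul [Fintype V] [DecidableRel G.Adj] {r : ℕ}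
    (hreg : G.IsRegularOfDegree r) (lam : Fin (Fintype.card V) → ℝ)
    (hfac : ∀ y : ℝ, det (y • (1 : Matrix V V ℝ) - G.adjMatrix ℝ) = ∏ i, (y - lam i))
    {a : ℝ} (ha : a ≠ 0) (c : ℝ) :
    det (a • 1 - c • ((incMat G)ᵀ * incMat G)) =
      a ^ ((Fintype.card G.edgeSet : ℤ) - Fintype.card V) * ∏ i, (a - c * (lam i + r)) := by
  have hshift : a • (1 : Matrix V V ℝ) - c • (G.adjMatrix ℝ + (r : ℝ) • 1) =
      (a - c * r) • 1 - c • G.adjMatrix ℝ := by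
    rw [smul_add, smul_smul, sub_smul]; abel
  rw [← Matrix.mul_smul, det_smul_one_sub_mul_comm ha, Matrix.smul_mul,
    incMat_mul_transpose_of_isRegularOfDegree G hreg, hshift,
    det_smul_one_sub_smul_of_det_eq_prod _ lam hfac]
  congr 1
  exact Finset.prod_congr rfl fun i _ => by ring

theorem smul_one_sub_tGraph_sub_smul [Fintype V] [DecidableRel G.Adj] (x Γ : ℝ) :
    fromBlocks (x • 1 - G.adjMatrix ℝ) (-incMat G) (-(incMat G)ᵀ)
        (x • 1 - G.lineGraph.adjMatrix ℝ) -
      Γ • (fromRows (G.adjMatrix ℝ) (incMat G)ᵀ * fromCols (G.adjMatrix ℝ) (incMat G)) =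
    fromBlocks (x • 1 - G.adjMatrix ℝ - Γ • G.adjMatrix ℝ ^ 2)
      (-((1 + Γ • G.adjMatrix ℝ) * incMat G)) (-((incMat G)ᵀ * (1 + Γ • G.adjMatrix ℝ)))
      ((x + 2) • 1 - (1 + Γ) • ((incMat G)ᵀ * incMat G)) := by
  rw [fromRows_mul_fromCols, fromBlocks_smul, sub_eq_add_neg, fromBlocks_neg, fromBlocks_add,
    incMat_transpose_mul]
  congr 1
  · rw [pow_two]; abel
  · rw [Matrix.add_mul, Matrix.one_mul, Matrix.smul_mul]; abel
  · rw [Matrix.mul_add, Matrix.mul_one, Matrix.mul_smul]; abel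
  · module

variable {V₂ : Type*} [DecidableEq V₂] (H : SimpleGraph V₂)

theorem adjMatrix_tVertexCorona_submatrix_sumAssoc [Fintype V] [DecidableRel G.Adj]
    [DecidableRel H.Adj] :
    ((tVertexCorona G H).adjMatrix ℝ).submatrix (Equiv.sumAssoc _ _ _) (Equiv.sumAssoc _ _ _) =
      fromBlocks (fromBlocks (G.adjMatrix ℝ) (incMat G) (incMat G)ᵀ (G.lineGraph.adjMatrix ℝ))
        ((fromRows (G.adjMatrix ℝ) (incMat G)ᵀ).submatrix id Prod.fst)
        ((fromCols (G.adjMatrix ℝ) (incMat G)).submatrix Prod.fst id)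
        ((1 : Matrix V V ℝ) ⊗ₖ H.adjMatrix ℝ) := by
  ext ((u | e) | ⟨i, w⟩) ((v | f) | ⟨j, w'⟩) <;>
    simp only [submatrix_apply, adjMatrix_apply] <;>
    simp [tVertexCorona, incMat, one_apply, lineGraph_adj_iff_exists] <;>
    split_ifs <;> aesop (add simp SimpleGraph.adj_comm)

end SimpleGraph

theorem adj_charpoly_tVertexCorona_general {V₁ V₂ : Type*} [Fintype V₁] [DecidableEq V₁]
    [Fintype V₂] [DecidableEq V₂]
    (G₁ : SimpleGraph V₁) (G₂ : SimpleGraph V₂)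
    [DecidableRel G₁.Adj] [DecidableRel G₂.Adj]
    (r₁ : ℕ) (hreg : G₁.IsRegularOfDegree r₁)
    -- the adjacency eigenvalues of `G₁`, listed with multiplicity in decreasing order
    (lam : Fin (Fintype.card V₁) → ℝ)
    (hfac : ∀ y : ℝ,
      Matrix.det (y • (1 : Matrix V₁ V₁ ℝ) - G₁.adjMatrix ℝ) = ∏ i, (y - lam i))
    (x Γ : ℝ) (hΓ : Γ = coronal (G₂.adjMatrix ℝ) x) (hx : x ≠ -2)
    (h1 : IsUnit (x • (1 : Matrix V₂ V₂ ℝ) - G₂.adjMatrix ℝ))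
    (h2 : IsUnit ((x + 2) • (1 : Matrix G₁.edgeSet G₁.edgeSet ℝ) -
        (1 + Γ) • ((incMat G₁)ᵀ * incMat G₁))) :
    Matrix.det (x • (1 : Matrix _ _ ℝ) - (tVertexCorona G₁ G₂).adjMatrix ℝ) =
      Matrix.det (x • (1 : Matrix V₂ V₂ ℝ) - G₂.adjMatrix ℝ) ^ Fintype.card V₁ *
      (x + 2) ^ ((Fintype.card G₁.edgeSet : ℤ) - (Fintype.card V₁ : ℤ)) *
      (∏ i, ((x + 2) - (1 + Γ) * (lam i + (r₁ : ℝ)))) *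
      Matrix.det (x • (1 : Matrix V₁ V₁ ℝ) - G₁.adjMatrix ℝ - Γ • (G₁.adjMatrix ℝ ^ 2) -
        (1 + Γ • G₁.adjMatrix ℝ) * incMat G₁ *
          ((x + 2) • (1 : Matrix G₁.edgeSet G₁.edgeSet ℝ) -
            (1 + Γ) • ((incMat G₁)ᵀ * incMat G₁))⁻¹ *
          (incMat G₁)ᵀ * (1 + Γ • G₁.adjMatrix ℝ)) := by
  have hx2 : x + 2 ≠ 0 := fun h => hx (by linarith)
  let : Invertible ((1 : Matrix V₁ V₁ ℝ) ⊗ₖ (x • 1 - G₂.adjMatrix ℝ)) :=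
    invertibleOfIsUnitDet _ (by
      rw [det_kronecker, det_one, one_pow, one_mul]
      exact ((isUnit_iff_isUnit_det _).1 h1).pow _)
  let := h2.invertible
  rw [← det_submatrix_equiv_self (Equiv.sumAssoc _ _ _), submatrix_smul_one_sub_equiv,
    SimpleGraph.adjMatrix_tVertexCorona_submatrix_sumAssoc,
    smul_one_sub_fromBlocks, smul_one_sub_fromBlocks, smul_one_sub_one_kronecker,
    det_fromBlocks₂₂, invOf_eq_nonsing_inv, inv_kronecker, inv_one]
  simp only [Matrix.neg_mul, Matrix.mul_neg, neg_neg]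
  rw [submatrix_fst_mul_one_kronecker_mul, ← coronal, ← hΓ,
    SimpleGraph.smul_one_sub_tGraph_sub_smul, det_fromBlocks₂₂, invOf_eq_nonsing_inv,
    SimpleGraph.det_smul_one_sub_smul_incMat_transpose_mul G₁ hreg lam hfac hx2,
    det_kronecker, det_one, one_pow, one_mul]
  simp only [Matrix.neg_mul, Matrix.mul_neg, neg_neg, Matrix.mul_assoc]
  ring

/-- The adjacency characteristic polynomial of the T-vertex neighbourhood corona
`G₁ ⊡_T G₂` of an `r₁`-regular graph `G₁` and an arbitrary graph `G₂`
(Theorem on the A-spectrum of the T-vertex neighbourhood corona). -/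
theorem adj_charpoly_tVertexCorona {V₁ V₂ : Type*} [Fintype V₁] [DecidableEq V₁]
    [Fintype V₂] [DecidableEq V₂]
    (G₁ : SimpleGraph V₁) (G₂ : SimpleGraph V₂)
    [DecidableRel G₁.Adj] [DecidableRel G₂.Adj]
    (r₁ : ℕ) (hreg : G₁.IsRegularOfDegree r₁)
    -- the adjacency eigenvalues of `G₁`, listed with multiplicity in decreasing order
    (lam : Fin (Fintype.card V₁) → ℝ) (hdec : Antitone lam)
    (hfac : ∀ y : ℝ,
      Matrix.det (y • (1 : Matrix V₁ V₁ ℝ) - G₁.adjMatrix ℝ) = ∏ i, (y - lam i))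
    (x Γ : ℝ) (hΓ : Γ = coronal (G₂.adjMatrix ℝ) x) (hx : x ≠ -2)
    (h1 : IsUnit (x • (1 : Matrix V₂ V₂ ℝ) - G₂.adjMatrix ℝ))
    (h2 : IsUnit ((x + 2) • (1 : Matrix G₁.edgeSet G₁.edgeSet ℝ) -
        (1 + Γ) • ((incMat G₁)ᵀ * incMat G₁))) :
    Matrix.det (x • (1 : Matrix _ _ ℝ) - (tVertexCorona G₁ G₂).adjMatrix ℝ) =
      Matrix.det (x • (1 : Matrix V₂ V₂ ℝ) - G₂.adjMatrix ℝ) ^ Fintype.card V₁ *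
      (x + 2) ^ ((Fintype.card G₁.edgeSet : ℤ) - (Fintype.card V₁ : ℤ)) *
      (∏ i, ((x + 2) - (1 + Γ) * (lam i + (r₁ : ℝ)))) *
      Matrix.det (x • (1 : Matrix V₁ V₁ ℝ) - G₁.adjMatrix ℝ - Γ • (G₁.adjMatrix ℝ ^ 2) -
        (1 + Γ • G₁.adjMatrix ℝ) * incMat G₁ *
          ((x + 2) • (1 : Matrix G₁.edgeSet G₁.edgeSet ℝ) -
            (1 + Γ) • ((incMat G₁)ᵀ * incMat G₁))⁻¹ *
          (incMat G₁)ᵀ * (1 + Γ • G₁.adjMatrix ℝ)) :=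
  adj_charpoly_tVertexCorona_general G₁ G₂ r₁ hreg lam hfac x Γ hΓ hx h1 h2
end

section
/- Let G_1 be an r_1-regular graph with m_1 edges and let G_2 be an r_2-regular graph with n_2 vertices. Then every real number λ ≠ r_2 that is an adjacency eigenvalue of G_2 with multiplicity k is an adjacency eigenvalue of the T-edge neighbourhood corona G_1 ⊟_T G_2 with multiplicity at least m_1·k. -/
/-!
Since `A(G₂)` is symmetric with row sums `r₂`, every `λ`-eigenvector `w` of `G₂` with `λ ≠ r₂` is
orthogonal to the all-ones vector. Put such vectors `w_e` on the copies of `G₂`, one per edge `e`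
of `G₁`, and zero on `T(G₁)`: a vertex `u` of `G₁` then sees the entry sums of the copies attached
to it, which vanish, edge-vertices of `T(G₁)` see nothing, and a vertex in the copy of `e` sees
`A(G₂) w_e`. This embeds `E(G₁) → ker (A(G₂) - λ)` into the `λ`-eigenspace of the corona, so the
geometric multiplicity of `λ` there is at least `m₁ k`; the algebraic multiplicity bounds it, and
for the symmetric `A(G₂)` both multiplicities of `λ` are `k`.
-/

open Finset Matrix Polynomial

open Module

theorem Matrix.IsHermitian.finrank_eigenspace_toLin' {𝕜 n : Type*} [RCLike 𝕜] [Fintype n]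
    [DecidableEq n] {A : Matrix n n 𝕜} (hA : A.IsHermitian) (μ : 𝕜) :
    finrank 𝕜 (End.eigenspace (toLin' A) μ) = A.charpoly.rootMultiplicity μ := by
  have hmap : End.eigenspace (toLin' A) μ =
      (End.eigenspace (toEuclideanLin A) μ).map
        (WithLp.linearEquiv 2 𝕜 (n → 𝕜) : EuclideanSpace 𝕜 n →ₗ[𝕜] n → 𝕜) := by
    ext x
    simp only [Module.End.mem_eigenspace_iff, Submodule.mem_map]
    constructor
    · intro h
      exact ⟨WithLp.toLp 2 x, congrArg (WithLp.toLp 2) h, rfl⟩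
    · rintro ⟨y, hy, rfl⟩
      exact congrArg WithLp.ofLp hy
  rw [hmap, LinearEquiv.finrank_map_eq,
    ← (isSymmetric_toEuclideanLin_iff.mpr hA).isFinitelySemisimple.maxGenEigenspace_eq_eigenspace,
    LinearMap.finrank_maxGenEigenspace_eq]
  exact congrArg _ (charpoly_toLin A (PiLp.basisFun 2 𝕜 n))

theorem Matrix.finrank_eigenspace_toLin'_le {K n : Type*} [Field K] [Fintype n] [DecidableEq n]
    (A : Matrix n n K) (μ : K) :
    finrank K (End.eigenspace (toLin' A) μ) ≤ A.charpoly.rootMultiplicity μ :=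
  charpoly_toLin' A ▸ LinearMap.finrank_eigenspace_le _ _

theorem SimpleGraph.IsRegularOfDegree.sum_eq_zero_of_adjMatrix_mulVec_eq_smul {V K : Type*}
    [Fintype V] {G : SimpleGraph V} [DecidableRel G.Adj] [Field K] {d : ℕ}
    (hG : G.IsRegularOfDegree d) {μ : K} (hμ : μ ≠ d) {w : V → K}
    (hw : G.adjMatrix K *ᵥ w = μ • w) : ∑ v, w v = 0 := by
  have hrow : Function.const V 1 ᵥ* G.adjMatrix K = Function.const V (d : K) := by
    ext v; simp [hG v]
  have h : (d : K) * ∑ v, w v = μ * ∑ v, w v := by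
    calc (d : K) * ∑ v, w v = (Function.const V 1 ᵥ* G.adjMatrix K) ⬝ᵥ w := by
          rw [hrow]; simp [dotProduct, Finset.mul_sum]
      _ = Function.const V 1 ⬝ᵥ (G.adjMatrix K *ᵥ w) := (dotProduct_mulVec _ _ _).symm
      _ = μ * ∑ v, w v := by rw [hw]; simp [dotProduct, Finset.mul_sum]
  have h' : ((d : K) - μ) * ∑ v, w v = 0 := by linear_combination h
  exact (mul_eq_zero.mp h').resolve_left (sub_ne_zero.mpr hμ.symm)

section TEdgeCorona

variable {V₁ V₂ : Type*} {G₁ : SimpleGraph V₁} {G₂ : SimpleGraph V₂}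

theorem tEdgeCorona_adj_inl_copy {u : V₁} {e : G₁.edgeSet} {v : V₂} :
    (tEdgeCorona G₁ G₂).Adj (.inl u) (.inr (.inr (e, v))) ↔ u ∈ (e : Sym2 V₁) := by
  simp [tEdgeCorona]

theorem tEdgeCorona_not_adj_edge_copy {f e : G₁.edgeSet} {v : V₂} :
    ¬ (tEdgeCorona G₁ G₂).Adj (.inr (.inl f)) (.inr (.inr (e, v))) := by
  simp [tEdgeCorona]

theorem tEdgeCorona_adj_copy_copy {f e : G₁.edgeSet} {u v : V₂} :
    (tEdgeCorona G₁ G₂).Adj (.inr (.inr (f, u))) (.inr (.inr (e, v))) ↔ f = e ∧ G₂.Adj u v := by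
  simp only [tEdgeCorona, SimpleGraph.fromRel_adj, ne_eq, Sum.inr.injEq, Prod.mk.injEq]
  constructor
  · rintro ⟨-, h | ⟨rfl, h⟩⟩
    exacts [h, ⟨rfl, h.symm⟩]
  · rintro ⟨rfl, h⟩
    exact ⟨fun ⟨_, huv⟩ => h.ne huv, .inl ⟨rfl, h⟩⟩

end TEdgeCorona

section Lift

variable {V₁ : Type*} (G₁ : SimpleGraph V₁) (V₂ K : Type*) [Semiring K]

def liftToCopies : (G₁.edgeSet → V₂ → K) →ₗ[K] (V₁ ⊕ (G₁.edgeSet ⊕ G₁.edgeSet × V₂) → K) where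
  toFun c := Sum.elim 0 (Sum.elim 0 (Function.uncurry c))
  map_add' c c' := by ext (_ | _ | ⟨_, _⟩) <;> simp
  map_smul' a c := by ext (_ | _ | ⟨_, _⟩) <;> simp

theorem liftToCopies_injective : Function.Injective (liftToCopies G₁ V₂ K) := by
  intro c c' h
  ext e v
  exact congrFun h (.inr (.inr (e, v)))

end Lift

theorem adjMatrix_tEdgeCorona_mulVec_liftToCopies {V₁ V₂ K : Type*} [Fintype V₁]
    [DecidableEq V₁] [Fintype V₂] {G₁ : SimpleGraph V₁} {G₂ : SimpleGraph V₂} [DecidableRel G₁.Adj]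
    [DecidableRel G₂.Adj] [CommRing K] {μ : K} {c : G₁.edgeSet → V₂ → K}
    (hc : ∀ e, G₂.adjMatrix K *ᵥ c e = μ • c e) (hsum : ∀ e, ∑ v, c e v = 0) :
    (tEdgeCorona G₁ G₂).adjMatrix K *ᵥ liftToCopies G₁ V₂ K c = μ • liftToCopies G₁ V₂ K c := by
  ext x
  simp only [mulVec, dotProduct, Fintype.sum_sum_type, Fintype.sum_prod_type, liftToCopies,
    LinearMap.coe_mk, AddHom.coe_mk, Sum.elim_inl, Sum.elim_inr, Pi.zero_apply, mul_zero,
    Finset.sum_const_zero, zero_add, Function.uncurry_apply_pair]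
  rcases x with u | f | ⟨f, u⟩
  · simp [SimpleGraph.adjMatrix_apply, tEdgeCorona_adj_inl_copy, ite_mul, hsum]
  · simp [SimpleGraph.adjMatrix_apply, tEdgeCorona_not_adj_edge_copy]
  · rw [Pi.smul_apply, Sum.elim_inr, Sum.elim_inr, Function.uncurry_apply_pair, ← Pi.smul_apply,
      ← hc f]
    simp [SimpleGraph.adjMatrix_apply, tEdgeCorona_adj_copy_copy, ite_and, mulVec, dotProduct]

theorem card_edgeSet_mul_finrank_eigenspace_le_tEdgeCorona {V₁ V₂ K : Type*} [Fintype V₁]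
    [DecidableEq V₁] [Fintype V₂] [DecidableEq V₂] {G₁ : SimpleGraph V₁} {G₂ : SimpleGraph V₂}
    [DecidableRel G₁.Adj] [DecidableRel G₂.Adj] [Field K] {r : ℕ}
    (hG₂ : G₂.IsRegularOfDegree r) {μ : K} (hμ : μ ≠ r) :
    Fintype.card G₁.edgeSet * finrank K (End.eigenspace (toLin' (G₂.adjMatrix K)) μ) ≤
      finrank K (End.eigenspace (toLin' ((tEdgeCorona G₁ G₂).adjMatrix K)) μ) := by
  set S := End.eigenspace (toLin' (G₂.adjMatrix K)) μ
  let Φ := liftToCopies G₁ V₂ K ∘ₗ S.subtype.compLeft G₁.edgeSet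
  have hΦ : Function.Injective Φ :=
    (liftToCopies_injective G₁ V₂ K).comp Subtype.val_injective.comp_left
  have hrange :
      LinearMap.range Φ ≤ End.eigenspace (toLin' ((tEdgeCorona G₁ G₂).adjMatrix K)) μ := by
    rintro _ ⟨c, rfl⟩
    have hc : ∀ e, G₂.adjMatrix K *ᵥ c e = μ • c e := fun e => End.mem_eigenspace_iff.mp (c e).2
    rw [End.mem_eigenspace_iff, toLin'_apply]
    exact adjMatrix_tEdgeCorona_mulVec_liftToCopies hc
      fun e => hG₂.sum_eq_zero_of_adjMatrix_mulVec_eq_smul hμ (hc e)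
  calc Fintype.card G₁.edgeSet * finrank K S = finrank K (G₁.edgeSet → S) := by
        simp [finrank_pi_fintype]
    _ = finrank K (LinearMap.range Φ) := (LinearMap.finrank_range_of_inj hΦ).symm
    _ ≤ _ := Submodule.finrank_mono hrange

theorem adj_eigenvalue_mult_tEdgeCorona_general {V₁ V₂ : Type*} [Fintype V₁] [DecidableEq V₁]
    [Fintype V₂] [DecidableEq V₂]
    (G₁ : SimpleGraph V₁) (G₂ : SimpleGraph V₂)
    [DecidableRel G₁.Adj] [DecidableRel G₂.Adj]
    (r₂ : ℕ) (hreg₂ : G₂.IsRegularOfDegree r₂)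
    (lam : ℝ) (hlam : lam ≠ (r₂ : ℝ)) (k : ℕ)
    (hmult : ((G₂.adjMatrix ℝ).charpoly).rootMultiplicity lam = k) :
    Fintype.card G₁.edgeSet * k ≤
      (((tEdgeCorona G₁ G₂).adjMatrix ℝ).charpoly).rootMultiplicity lam := by
  rw [← hmult, ← (G₂.isHermitian_adjMatrix ℝ).finrank_eigenspace_toLin']
  exact (card_edgeSet_mul_finrank_eigenspace_le_tEdgeCorona hreg₂ hlam).trans
    (Matrix.finrank_eigenspace_toLin'_le _ lam)

/-- Every adjacency eigenvalue `lam ≠ r₂` of the `r₂`-regular graph `G₂`, of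
multiplicity `k`, is an adjacency eigenvalue of the T-edge neighbourhood corona
`G₁ ⊟_T G₂` with multiplicity at least `m₁ · k`. -/
theorem adj_eigenvalue_mult_tEdgeCorona {V₁ V₂ : Type*} [Fintype V₁] [DecidableEq V₁]
    [Fintype V₂] [DecidableEq V₂]
    (G₁ : SimpleGraph V₁) (G₂ : SimpleGraph V₂)
    [DecidableRel G₁.Adj] [DecidableRel G₂.Adj]
    (r₁ r₂ : ℕ) (hreg₁ : G₁.IsRegularOfDegree r₁) (hreg₂ : G₂.IsRegularOfDegree r₂)
    (lam : ℝ) (hlam : lam ≠ (r₂ : ℝ)) (k : ℕ) (hk : 0 < k)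
    (hmult : ((G₂.adjMatrix ℝ).charpoly).rootMultiplicity lam = k) :
    Fintype.card G₁.edgeSet * k ≤
      (((tEdgeCorona G₁ G₂).adjMatrix ℝ).charpoly).rootMultiplicity lam :=
  adj_eigenvalue_mult_tEdgeCorona_general G₁ G₂ r₂ hreg₂ lam hlam k hmult
end
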